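/- arXiv:2404.09261 — 6 statements merged into one kernel-verified Lean document; each statement's English description precedes it below -/
import Mathlib

section
/- Let (G, R) be a Rota-Baxter group. Define a new multiplication on G by x ⋆ y = x·R(x)·y·R(x)⁻¹. Then (G, ⋆) is a group with the same identity element as G, the inverse of x in (G,⋆) is R(x)⁻¹ x⁻¹ R(x), and R is a group homomorphism from (G,⋆) to G, i.e. R(x ⋆ y) = R(x)R(y). -/
/-! `R (x ⋆ y) = R x * R y` is the Rota-Baxter identity read backwards. With it, associativity of
`⋆` becomes a group identity, and applying `R` to `1 ⋆ 1 = 1` and to `x ⋆ x̄ = 1`, where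
`x̄ = (R x)⁻¹ x⁻¹ R x`, gives `R 1 = 1` and `R x̄ = (R x)⁻¹`, which yield the remaining laws. -/

/-- The descendant product `x ⋆ y = x · R x · y · (R x)⁻¹` on a Rota-Baxter group. -/
def rbStar {G : Type*} [Group G] (R : G → G) (x y : G) : G :=
  x * R x * y * (R x)⁻¹

def IsRotaBaxter {G : Type*} [Group G] (R : G → G) : Prop :=
  ∀ g h : G, R g * R h = R (g * R g * h * (R g)⁻¹)

namespace IsRotaBaxter

variable {G : Type*} [Group G] {R : G → G}

theorem rbStar_one (x : G) : rbStar R x 1 = x := by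
  simp only [rbStar]; group

theorem rbStar_inv_right (x : G) : rbStar R x ((R x)⁻¹ * x⁻¹ * R x) = 1 := by
  simp only [rbStar]; group

variable (hR : IsRotaBaxter R)
include hR

theorem map_rbStar (x y : G) : R (rbStar R x y) = R x * R y :=
  (hR x y).symm

theorem map_one : R 1 = 1 := by
  have h := hR.map_rbStar 1 1
  rwa [rbStar_one, left_eq_mul] at h

theorem map_rbInv (x : G) : R ((R x)⁻¹ * x⁻¹ * R x) = (R x)⁻¹ := by
  have h := hR.map_rbStar x ((R x)⁻¹ * x⁻¹ * R x)
  rw [rbStar_inv_right, hR.map_one] at h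
  exact eq_inv_of_mul_eq_one_right h.symm

theorem rbStar_assoc (x y z : G) :
    rbStar R (rbStar R x y) z = rbStar R x (rbStar R y z) := by
  rw [rbStar, hR.map_rbStar]
  simp only [rbStar]; group

theorem one_rbStar (x : G) : rbStar R 1 x = x := by
  simp only [rbStar, hR.map_one]; group

theorem rbStar_inv_left (x : G) : rbStar R ((R x)⁻¹ * x⁻¹ * R x) x = 1 := by
  simp only [rbStar, hR.map_rbInv]; group

end IsRotaBaxter

/-- `(G, ⋆)` is a group with the same identity, inverse of `x` equal to
`(R x)⁻¹ x⁻¹ (R x)`, and `R` is a homomorphism from `(G,⋆)` to `G`. -/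
theorem stmt3 {G : Type*} [Group G] (R : G → G)
    (hR : ∀ g h : G, R g * R h = R (g * R g * h * (R g)⁻¹)) :
    (∀ x y z : G, rbStar R (rbStar R x y) z = rbStar R x (rbStar R y z)) ∧
    (∀ x : G, rbStar R 1 x = x) ∧
    (∀ x : G, rbStar R x 1 = x) ∧
    (∀ x : G, rbStar R x ((R x)⁻¹ * x⁻¹ * R x) = 1) ∧
    (∀ x : G, rbStar R ((R x)⁻¹ * x⁻¹ * R x) x = 1) ∧
    (∀ x y : G, R (rbStar R x y) = R x * R y) :=
  ⟨IsRotaBaxter.rbStar_assoc hR, IsRotaBaxter.one_rbStar hR, IsRotaBaxter.rbStar_one,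
    IsRotaBaxter.rbStar_inv_right, IsRotaBaxter.rbStar_inv_left hR, IsRotaBaxter.map_rbStar hR⟩
end

section
/- Let g be a Lie algebra over a field of characteristic zero with g³ = 0. Define x * y = x + y + (1/2)[x,y]. Then (g, +, *) is a brace: (g,+) is an abelian group, (g,*) is a group, and x*(y+z) = (x*y) − x + (x*z) for all x,y,z ∈ g. -/
/-- The BCH product `x * y = x + y + (1/2)[x,y]` on a Lie algebra with `g³ = 0`. -/
def bchMul (k : Type*) {L : Type*} [Field k] [LieRing L] [LieAlgebra k L]
    (x y : L) : L :=
  x + y + (2 : k)⁻¹ • ⁅x, y⁆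

/-- if `g³ = 0`, then `(g, +, *)` with `x * y = x + y + (1/2)[x,y]` is a
brace: `(g,+)` is an abelian group, `(g,*)` is a group, and
`x*(y+z) = (x*y) - x + (x*z)`. -/
theorem stmt5 {k L : Type*} [Field k] [CharZero k] [LieRing L] [LieAlgebra k L]
    (hnil : ∀ x y z : L, ⁅x, ⁅y, z⁆⁆ = 0) :
    (∀ x y : L, x + y = y + x) ∧
    (∀ x y z : L, bchMul k (bchMul k x y) z = bchMul k x (bchMul k y z)) ∧
    (∀ x : L, bchMul k 0 x = x) ∧
    (∀ x : L, bchMul k x 0 = x) ∧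
    (∀ x : L, bchMul k x (-x) = 0) ∧
    (∀ x : L, bchMul k (-x) x = 0) ∧
    (∀ x y z : L, bchMul k x (y + z) = bchMul k x y - x + bchMul k x z) := by
  have hnil' : ∀ x y z : L, ⁅⁅x, y⁆, z⁆ = 0 := by
    intro x y z; rw [← lie_skew]; simp [hnil]
  refine ⟨fun x y => add_comm x y, ?_, ?_, ?_, ?_, ?_, ?_⟩
  · intro x y z
    simp only [bchMul, add_lie, lie_add, lie_smul, smul_lie, hnil, hnil', smul_zero,
      add_zero, smul_add]
    abel
  · intro x; simp [bchMul]
  · intro x; simp [bchMul]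
  · intro x; simp [bchMul]
  · intro x; simp [bchMul]
  · intro x y z
    simp only [bchMul, lie_add, smul_add]
    abel
end

section
/- Let g be the 3-dimensional Heisenberg Lie algebra with [e₁,e₂]=e₃ and R the linear map R(e₁)=e₂, R(e₂)=e₁, R(e₃)=−e₃. Define the group operation x*y = x+y+(1/2)[x,y] on g and the map 𝔯(x) = R(x) − (1/2)R([R(x),x]). Then 𝔯 is a Rota-Baxter operator on the group (g,*), i.e. 𝔯(x)*𝔯(y) = 𝔯(x * 𝔯(x) * y * (𝔯(x))⁻¹) for all x,y ∈ g, where the inverse of z in (g,*) is −z. -/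
/-- The integrated operator `𝔯(x) = R x - (1/2) R [R x, x]`. -/
def rbInt {k L : Type*} [Field k] [LieRing L] [LieAlgebra k L]
    (R : L →ₗ[k] L) (x : L) : L :=
  R x - (2 : k)⁻¹ • R ⁅R x, x⁆

/-- on the Heisenberg Lie algebra with `R e₁ = e₂`, `R e₂ = e₁`,
`R e₃ = -e₃`, the map `𝔯(x) = R x - (1/2) R [R x, x]` is a Rota-Baxter operator on
the group `(g, *)`, where `x * y = x + y + (1/2)[x,y]` and the `*`-inverse of `z` is `-z`. -/
theorem stmt7 {k L : Type*} [Field k] [CharZero k] [LieRing L] [LieAlgebra k L]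
    (e₁ e₂ e₃ : L)
    (hspan : ∀ x : L, ∃ a b c : k, x = a • e₁ + b • e₂ + c • e₃)
    (h12 : ⁅e₁, e₂⁆ = e₃) (h13 : ⁅e₁, e₃⁆ = 0) (h23 : ⁅e₂, e₃⁆ = 0)
    (R : L →ₗ[k] L)
    (hR1 : R e₁ = e₂) (hR2 : R e₂ = e₁) (hR3 : R e₃ = -e₃) :
    ∀ x y : L,
      bchMul k (rbInt R x) (rbInt R y) =
        rbInt R (bchMul k (bchMul k (bchMul k x (rbInt R x)) y) (-(rbInt R x))) := by
  have h21 : ⁅e₂, e₁⁆ = -e₃ := by rw [← lie_skew, h12]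
  have h31 : ⁅e₃, e₁⁆ = 0 := by rw [← lie_skew, h13, neg_zero]
  have h32 : ⁅e₃, e₂⁆ = 0 := by rw [← lie_skew, h23, neg_zero]
  -- bracket of two coordinate vectors
  have hbr : ∀ a b c a' b' c' : k,
      ⁅a • e₁ + b • e₂ + c • e₃, a' • e₁ + b' • e₂ + c' • e₃⁆
        = (a * b' - b * a') • e₃ := by
    intro a b c a' b' c'
    simp only [lie_add, add_lie, lie_smul, smul_lie, h12, h13, h23, h21, h31, h32,
      lie_self, smul_zero, smul_neg, add_zero, zero_add, smul_smul]
    module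
  -- R on coordinate vectors
  have hRv : ∀ a b c : k, R (a • e₁ + b • e₂ + c • e₃)
      = b • e₁ + a • e₂ + (-c) • e₃ := by
    intro a b c
    simp only [map_add, map_smul, hR1, hR2, hR3]
    module
  -- rbInt on coordinate vectors
  have hrb : ∀ a b c : k, rbInt R (a • e₁ + b • e₂ + c • e₃)
      = b • e₁ + a • e₂ + (-c - (2:k)⁻¹ * (a*a - b*b)) • e₃ := by
    intro a b c
    rw [rbInt, hRv, hbr, map_smul, hR3]
    module
  -- bchMul on coordinate vectors
  have hm : ∀ a b c a' b' c' : k,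
      bchMul k (a • e₁ + b • e₂ + c • e₃) (a' • e₁ + b' • e₂ + c' • e₃)
        = (a + a') • e₁ + (b + b') • e₂ + (c + c' + (2:k)⁻¹ * (a * b' - b * a')) • e₃ := by
    intro a b c a' b' c'
    rw [bchMul, hbr]
    module
  have hneg : ∀ a b c : k, -(a • e₁ + b • e₂ + c • e₃)
      = (-a) • e₁ + (-b) • e₂ + (-c) • e₃ := by intro a b c; module
  intro x y
  obtain ⟨a, b, c, hx⟩ := hspan x
  obtain ⟨a', b', c', hy⟩ := hspan y
  subst hx hy
  rw [hrb, hrb, hm, hneg, hm, hm, hm, hrb]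
  module
end

section
/- Let g be a nilpotent Lie algebra of nilindex 3 over a field of characteristic zero (g³ = 0) and R a Rota-Baxter operator of weight 1 on g with R(g²) ⊆ g². Then the map 𝔯(x) = R(x) − (1/2)R([R(x),x]) is a Rota-Baxter operator on the group (g,*) where x*y = x+y+(1/2)[x,y]. -/
/-- if `g` is nilpotent of nilindex 3 and `R` is a Rota-Baxter operator
of weight 1 preserving `g² = [g,g]`, then `𝔯(x) = R x - (1/2) R [R x, x]` is a
Rota-Baxter operator on the group `(g, *)` with `x * y = x + y + (1/2)[x,y]`. -/
theorem stmt8 {k L : Type*} [Field k] [CharZero k] [LieRing L] [LieAlgebra k L]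
    (hnil : ∀ x y z : L, ⁅x, ⁅y, z⁆⁆ = 0)
    (R : L →ₗ[k] L)
    (hRB : ∀ x y : L, ⁅R x, R y⁆ = R (⁅R x, y⁆ + ⁅x, R y⁆ + ⁅x, y⁆))
    (hR2 : ∀ x ∈ Submodule.span k {z : L | ∃ a b : L, z = ⁅a, b⁆},
      R x ∈ Submodule.span k {z : L | ∃ a b : L, z = ⁅a, b⁆}) :
    ∀ x y : L,
      bchMul k (rbInt R x) (rbInt R y) =
        rbInt R (bchMul k (bchMul k (bchMul k x (rbInt R x)) y) (-(rbInt R x))) := by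

  have hgen : ∀ a b : L, ⁅a, b⁆ ∈ Submodule.span k {z : L | ∃ a b : L, z = ⁅a, b⁆} :=
    fun a b => Submodule.subset_span ⟨a, b, rfl⟩
  have hcent : ∀ z ∈ Submodule.span k {z : L | ∃ a b : L, z = ⁅a, b⁆}, ∀ w : L, ⁅z, w⁆ = 0 := by
    intro z hz
    induction hz using Submodule.span_induction with
    | mem z hz => rintro w; obtain ⟨a, b, rfl⟩ := hz
                  rw [← lie_skew]; rw [hnil]; simp
    | zero => intro w; simp
    | add a b _ _ ha hb => intro w; rw [add_lie, ha, hb, add_zero]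
    | smul c a _ ha => intro w; rw [smul_lie, ha, smul_zero]
  have hc : ∀ u v w : L, ⁅⁅u, v⁆, w⁆ = 0 := fun u v w => hcent _ (hgen u v) w
  have h1 : ∀ u v w : L, ⁅R ⁅u, v⁆, w⁆ = 0 := fun u v w => hcent _ (hR2 _ (hgen u v)) w
  have h2 : ∀ u v w : L, ⁅w, R ⁅u, v⁆⁆ = 0 := fun u v w => by
    rw [← lie_skew, h1, neg_zero]
  have h3 : ∀ u v w : L, ⁅R (R ⁅u, v⁆), w⁆ = 0 := fun u v w =>
    hcent _ (hR2 _ (hR2 _ (hgen u v))) w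
  have h4 : ∀ u v w : L, ⁅w, R (R ⁅u, v⁆)⁆ = 0 := fun u v w => by
    rw [← lie_skew, h3, neg_zero]
  intro x y
  simp only [bchMul, rbInt, lie_add, add_lie, lie_sub, sub_lie, lie_neg, neg_lie,
    lie_smul, smul_lie, map_add, map_sub, map_smul, map_neg, hnil, hc, h1, h2, h3, h4,
    lie_self, smul_zero, neg_zero, add_zero, zero_add, sub_zero, zero_sub, map_zero,
    smul_neg, neg_neg, hRB]
  have e1 : R ⁅y, R x⁆ = -R ⁅R x, y⁆ := by rw [← lie_skew, map_neg]
  have e2 : R ⁅R y, x⁆ = -R ⁅x, R y⁆ := by rw [← lie_skew, map_neg]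
  simp only [e1, e2]
  module
end

section
/- Let (G, F_•G, 𝔯) be a filtered Rota-Baxter group: (G, F_•G) is a filtered group and 𝔯 is a Rota-Baxter operator on G with 𝔯(FₙG) ⊆ FₙG for all n. Then for each n ≥ 1 the map 𝔯ₙ on grₙG = FₙG/Fₙ₊₁G defined by 𝔯ₙ(x̄) = 𝔯(x)‾ is well defined and is an endomorphism of the abelian group grₙG. -/
/-!
The Rota–Baxter identity gives `𝔯(x)⁻¹ 𝔯(x') = 𝔯(𝔯(x)⁻¹ (x⁻¹x') 𝔯(x))`, and conjugation by an
element of `FₙG` preserves every `FₖG` because the commutator lands in `Fₙ₊ₖG`; so `𝔯` respects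
congruence mod `Fₙ₊₁G`. Additivity reduces to this: `𝔯(x)𝔯(y) = 𝔯(x 𝔯(x) y 𝔯(x)⁻¹)`, and
`x 𝔯(x) y 𝔯(x)⁻¹ ≡ xy` mod the commutator `⁅y⁻¹, 𝔯(x)⁆ ∈ F₂ₙG`.
-/

open scoped commutatorElement

namespace FilteredRotaBaxter

variable {G : Type*} [Group G]

theorem inv_mul_eq_map_conj {R : G → G}
    (hRB : ∀ g h : G, R g * R h = R (g * R g * h * (R g)⁻¹)) (x y : G) :
    (R x)⁻¹ * R y = R ((R x)⁻¹ * (x⁻¹ * y) * R x) := by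
  rw [inv_mul_eq_iff_eq_mul, hRB]
  congr 1
  group

variable {F : ℕ → Subgroup G}

theorem filtration_le_of_le {k m : ℕ} (hdesc : ∀ n, 1 ≤ n → F (n + 1) ≤ F n) (hk : 1 ≤ k)
    (hkm : k ≤ m) : F m ≤ F k :=
  antitoneOn_nat_Ici_of_succ_le hdesc hk (hk.trans hkm) hkm

theorem commutatorElement_mem {n m k : ℕ} (hdesc : ∀ n, 1 ≤ n → F (n + 1) ≤ F n)
    (hcomm : ∀ n m, 1 ≤ n → 1 ≤ m → ⁅F n, F m⁆ ≤ F (n + m))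
    (hn : 1 ≤ n) (hm : 1 ≤ m) (hk : 1 ≤ k) (hknm : k ≤ n + m)
    {a b : G} (ha : a ∈ F n) (hb : b ∈ F m) : ⁅a, b⁆ ∈ F k :=
  filtration_le_of_le hdesc hk hknm <| hcomm n m hn hm <| Subgroup.commutator_mem_commutator ha hb

theorem conj_mem {n k : ℕ} (hdesc : ∀ n, 1 ≤ n → F (n + 1) ≤ F n)
    (hcomm : ∀ n m, 1 ≤ n → 1 ≤ m → ⁅F n, F m⁆ ≤ F (n + m))
    (hn : 1 ≤ n) (hk : 1 ≤ k) {a c : G} (ha : a ∈ F n) (hc : c ∈ F k) :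
    a * c * a⁻¹ ∈ F k := by
  have hconj : a * c * a⁻¹ = ⁅a, c⁆ * c := by
    rw [commutatorElement_def]; group
  rw [hconj]
  exact mul_mem (commutatorElement_mem hdesc hcomm hn hk hk (by omega) ha hc) hc

theorem inv_mul_mem_of_inv_mul_mem {R : G → G} {n k : ℕ}
    (hdesc : ∀ n, 1 ≤ n → F (n + 1) ≤ F n)
    (hcomm : ∀ n m, 1 ≤ n → 1 ≤ m → ⁅F n, F m⁆ ≤ F (n + m))
    (hRB : ∀ g h : G, R g * R h = R (g * R g * h * (R g)⁻¹))
    (hRF : ∀ n, 1 ≤ n → ∀ x ∈ F n, R x ∈ F n)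
    (hn : 1 ≤ n) (hk : 1 ≤ k) {x x' : G} (hx : x ∈ F n) (hxx' : x⁻¹ * x' ∈ F k) :
    (R x)⁻¹ * R x' ∈ F k := by
  rw [inv_mul_eq_map_conj hRB]
  refine hRF k hk _ ?_
  simpa using conj_mem hdesc hcomm hn hk (inv_mem (hRF n hn x hx)) hxx'

theorem inv_map_mul_mul_mem_succ {R : G → G} {n : ℕ}
    (hdesc : ∀ n, 1 ≤ n → F (n + 1) ≤ F n)
    (hcomm : ∀ n m, 1 ≤ n → 1 ≤ m → ⁅F n, F m⁆ ≤ F (n + m))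
    (hRB : ∀ g h : G, R g * R h = R (g * R g * h * (R g)⁻¹))
    (hRF : ∀ n, 1 ≤ n → ∀ x ∈ F n, R x ∈ F n)
    (hn : 1 ≤ n) {x y : G} (hx : x ∈ F n) (hy : y ∈ F n) :
    (R (x * y))⁻¹ * (R x * R y) ∈ F (n + 1) := by
  have hRx := hRF n hn x hx
  have hdiff : (x * y)⁻¹ * (x * R x * y * (R x)⁻¹) = ⁅y⁻¹, R x⁆ := by
    rw [commutatorElement_def]; group
  rw [hRB]
  refine inv_mul_mem_of_inv_mul_mem hdesc hcomm hRB hRF hn (by omega) (mul_mem hx hy) ?_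
  rw [hdiff]
  exact commutatorElement_mem hdesc hcomm hn hn (by omega) (by omega) (inv_mem hy) hRx

end FilteredRotaBaxter

theorem stmt15_general {G : Type*} [Group G] (F : ℕ → Subgroup G) (R : G → G)
    (hdesc : ∀ n, 1 ≤ n → F (n + 1) ≤ F n)
    (hcomm : ∀ n m, 1 ≤ n → 1 ≤ m → ⁅F n, F m⁆ ≤ F (n + m))
    (hRB : ∀ g h : G, R g * R h = R (g * R g * h * (R g)⁻¹))
    (hRF : ∀ n, 1 ≤ n → ∀ x ∈ F n, R x ∈ F n) :
    ∀ n, 1 ≤ n →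
      (∀ x ∈ F n, ∀ x' ∈ F n, x⁻¹ * x' ∈ F (n + 1) → (R x)⁻¹ * R x' ∈ F (n + 1)) ∧
      (∀ x ∈ F n, ∀ y ∈ F n, (R (x * y))⁻¹ * (R x * R y) ∈ F (n + 1)) := by
  intro n hn
  exact ⟨fun _ hx _ _ hxx' =>
      FilteredRotaBaxter.inv_mul_mem_of_inv_mul_mem hdesc hcomm hRB hRF hn (by omega) hx hxx',
    fun _ hx _ hy => FilteredRotaBaxter.inv_map_mul_mul_mem_succ hdesc hcomm hRB hRF hn hx hy⟩

/-- for a filtered Rota-Baxter group `(G, F_•G, 𝔯)`, the induced map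
`𝔯ₙ(x̄) = 𝔯(x)‾` on `grₙG = FₙG/Fₙ₊₁G` is well defined (if `x ≡ x'` mod `Fₙ₊₁G` then
`𝔯(x) ≡ 𝔯(x')`) and additive (`𝔯(xy) ≡ 𝔯(x)𝔯(y)` mod `Fₙ₊₁G`), i.e. it is an
endomorphism of the abelian group `grₙG`. -/
theorem stmt15 {G : Type*} [Group G] (F : ℕ → Subgroup G) (R : G → G)
    (hF1 : F 1 = ⊤)
    (hdesc : ∀ n, 1 ≤ n → F (n + 1) ≤ F n)
    (hcomm : ∀ n m, 1 ≤ n → 1 ≤ m → ⁅F n, F m⁆ ≤ F (n + m))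
    (hRB : ∀ g h : G, R g * R h = R (g * R g * h * (R g)⁻¹))
    (hRF : ∀ n, 1 ≤ n → ∀ x ∈ F n, R x ∈ F n) :
    ∀ n, 1 ≤ n →
      (∀ x ∈ F n, ∀ x' ∈ F n, x⁻¹ * x' ∈ F (n + 1) → (R x)⁻¹ * R x' ∈ F (n + 1)) ∧
      (∀ x ∈ F n, ∀ y ∈ F n, (R (x * y))⁻¹ * (R x * R y) ∈ F (n + 1)) :=
  stmt15_general F R hdesc hcomm hRB hRF
end

section
/- Let (G, 𝔯) be a Rota-Baxter group. Then for all x, y ∈ G: (𝔯(x), 𝔯(y)) = 𝔯( (x,y) · ((𝔯(x),y))^{yxy⁻¹} · ((𝔯(x),𝔯(y)))^{yx} · ((x,𝔯(y)))^{y} · (𝔯(y),𝔯(x)) ), where (a,b) = aba⁻¹b⁻¹ and a^{c} = c a c⁻¹. -/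
/-- The commutator `(a,b) = a b a⁻¹ b⁻¹`. -/
def commG {G : Type*} [Group G] (a b : G) : G := a * b * a⁻¹ * b⁻¹

/-- The conjugate `a^c = c a c⁻¹`. -/
def conjG {G : Type*} [Group G] (a c : G) : G := c * a * c⁻¹

/-- in a Rota-Baxter group,
`(R x, R y) = R((x,y)·((R x,y))^{yxy⁻¹}·((R x,R y))^{yx}·((x,R y))^{y}·(R y,R x))`. -/
theorem stmt16 {G : Type*} [Group G] (R : G → G)
    (hRB : ∀ g h : G, R g * R h = R (g * R g * h * (R g)⁻¹)) :
    ∀ x y : G,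
      commG (R x) (R y) =
        R (commG x y * conjG (commG (R x) y) (y * x * y⁻¹) *
          conjG (commG (R x) (R y)) (y * x) * conjG (commG x (R y)) y *
          commG (R y) (R x)) := by
  have h1 : R 1 = 1 := by
    have h := hRB 1 1
    simp at h
    exact h
  have hinv : ∀ g : G, (R g)⁻¹ = R ((R g)⁻¹ * g⁻¹ * R g) := by
    intro g
    have h := hRB g ((R g)⁻¹ * g⁻¹ * R g)
    have harg : g * R g * ((R g)⁻¹ * g⁻¹ * R g) * (R g)⁻¹ = 1 := by group
    rw [harg, h1] at h
    exact (eq_inv_of_mul_eq_one_right h).symm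
  intro x y
  set a := x * R x * y * (R x)⁻¹ with ha
  have h12 : R x * R y = R a := hRB x y
  set xi := (R x)⁻¹ * x⁻¹ * R x with hxi
  set yi := (R y)⁻¹ * y⁻¹ * R y with hyi
  have h3 : R x * R y * (R x)⁻¹ = R (a * (R x * R y) * xi * (R x * R y)⁻¹) := by
    rw [hinv x, h12]
    rw [hRB a xi]
  set b := a * (R x * R y) * xi * (R x * R y)⁻¹ with hb
  have h4 : R x * R y * (R x)⁻¹ * (R y)⁻¹ =
      R (b * (R x * R y * (R x)⁻¹) * yi * (R x * R y * (R x)⁻¹)⁻¹) := by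
    rw [hinv y, h3]
    rw [hRB b yi]
  have goalarg : b * (R x * R y * (R x)⁻¹) * yi * (R x * R y * (R x)⁻¹)⁻¹ =
      commG x y * conjG (commG (R x) y) (y * x * y⁻¹) *
        conjG (commG (R x) (R y)) (y * x) * conjG (commG x (R y)) y *
        commG (R y) (R x) := by
    simp only [hb, ha, hxi, hyi, commG, conjG]
    group
  show R x * R y * (R x)⁻¹ * (R y)⁻¹ = _
  rw [h4, goalarg]
end
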